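/- Let n be a positive integer, C an additive category, E : C^op × C → Ab a biadditive functor, A, C objects of C, and δ ∈ E(C,A). Let ⟨X•,δ⟩ and ⟨Y•,δ⟩ be n-exangles with X^0 = Y^0 = A and X^{n+1} = Y^{n+1} = C. If f• : X• → Y• is a morphism of complexes satisfying (f^0)_*δ = (f^{n+1})^*δ and f^{n+1} = id_C, then f• is homotopic to a morphism of complexes f′• : X• → Y• with f′^0 = id_A and f′^{n+1} = id_C. -/

import Mathlib

/-!
Basic definitions for the theory of `n`-exangulated categories
(Herschend–Liu–Nakaoka): `(n+2)`-term complexes in an additive category,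
morphisms of such complexes, homotopies, and homotopy equivalences.

A complex is recorded as a function `obj : ℕ → C` together with differentials
`d i : obj i ⟶ obj (i+1)`; only the components in degrees `0, …, n+1`
(and the differentials `d 0, …, d n`) are relevant, which is why all
conditions are imposed only in that range.
-/

open CategoryTheory CategoryTheory.Limits Opposite

universe w v u

namespace NExangulated

variable (C : Type u) [Category.{v} C] [Preadditive C]

/-- An `(n+2)`-term complex `X^0 → X^1 → ⋯ → X^{n+1}` in `C`. -/
structure NComplex (n : ℕ) where
  /-- the objects; only `obj 0, …, obj (n+1)` are relevant -/
  obj : ℕ → C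
  /-- the differentials -/
  d : ∀ i : ℕ, obj i ⟶ obj (i + 1)
  /-- `d^{i+1} ∘ d^i = 0` for `0 ≤ i ≤ n-1` -/
  d_comp_d : ∀ i : ℕ, i + 1 ≤ n → d i ≫ d (i + 1) = 0

variable {C}
variable {n : ℕ}

/-- A morphism of `(n+2)`-term complexes. -/
structure NComplexHom (X Y : NComplex C n) where
  /-- the components; only `f 0, …, f (n+1)` are relevant -/
  f : ∀ i : ℕ, X.obj i ⟶ Y.obj i
  /-- compatibility with the differentials, for `0 ≤ i ≤ n` -/
  comm : ∀ i : ℕ, i ≤ n → f i ≫ Y.d i = X.d i ≫ f (i + 1)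

/-- The identity morphism of complexes. -/
def NComplexHom.id (X : NComplex C n) : NComplexHom X X where
  f _ := 𝟙 _
  comm _ _ := by simp

/-- Composition of morphisms of complexes (in diagrammatic order:
`f.comp g` is `g• ∘ f•`). -/
def NComplexHom.comp {X Y Z : NComplex C n} (f : NComplexHom X Y) (g : NComplexHom Y Z) :
    NComplexHom X Z where
  f i := f.f i ≫ g.f i
  comm i hi := by
    rw [Category.assoc, g.comm i hi, ← Category.assoc, f.comm i hi, Category.assoc]

/-- `φ` is a homotopy from `f` to `g`:  here `φ i : X^{i+1} ⟶ Y^i` plays the role of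
the component `φ^{i+1}` (for `0 ≤ i ≤ n`, i.e. `1 ≤ i+1 ≤ n+1`). -/
def IsHomotopy {X Y : NComplex C n} (f g : NComplexHom X Y)
    (φ : ∀ i : ℕ, X.obj (i + 1) ⟶ Y.obj i) : Prop :=
  (g.f 0 - f.f 0 = X.d 0 ≫ φ 0) ∧
    (∀ i : ℕ, i + 1 ≤ n →
      g.f (i + 1) - f.f (i + 1) = φ i ≫ Y.d i + X.d (i + 1) ≫ φ (i + 1)) ∧
    (g.f (n + 1) - f.f (n + 1) = φ n ≫ Y.d n)

/-- Two morphisms of complexes are homotopic. -/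
def Homotopic {X Y : NComplex C n} (f g : NComplexHom X Y) : Prop :=
  ∃ φ, IsHomotopy f g φ

/-- `g` is a homotopy inverse of `f`. -/
def IsHomotopyInverse {X Y : NComplex C n} (f : NComplexHom X Y) (g : NComplexHom Y X) : Prop :=
  Homotopic (f.comp g) (NComplexHom.id X) ∧ Homotopic (g.comp f) (NComplexHom.id Y)

/-- `f` is a homotopy equivalence of complexes. -/
def IsHomotopyEquiv {X Y : NComplex C n} (f : NComplexHom X Y) : Prop :=
  ∃ g, IsHomotopyInverse f g

/-- Exactness of a two-term sequence of (pointed) sets at the middle term: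
the image of `f` equals the kernel of `g`. -/
def ExactAt {α β γ : Type*} [Zero γ] (f : α → β) (g : β → γ) : Prop :=
  ∀ b : β, g b = 0 ↔ ∃ a : α, f a = b

end NExangulated
namespace NExangulated

variable {C : Type u} [Category.{v} C] [Preadditive C] {n : ℕ}

section E

variable (E : Cᵒᵖ ⥤ C ⥤ AddCommGrpCat.{w})

/-- `a_*δ := E(id, a)(δ)`. -/
def pushE {A A' B : C} (a : A ⟶ A') (δ : (E.obj (op B)).obj A) : (E.obj (op B)).obj A' :=
  (E.obj (op B)).map a δ

/-- `c^*δ := E(c, id)(δ)`. -/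
def pullE {A B B' : C} (c : B' ⟶ B) (δ : (E.obj (op B)).obj A) : (E.obj (op B')).obj A :=
  (E.map c.op).app A δ

/-- `⟨X, δ⟩` is an `E`-attached complex: `(d^0)_*δ = 0` and `(d^n)^*δ = 0`. -/
def IsAttached (X : NComplex C n) (δ : (E.obj (op (X.obj (n + 1)))).obj (X.obj 0)) : Prop :=
  pushE E (X.d 0) δ = 0 ∧ pullE E (X.d n) δ = 0

/-- `⟨X, δ⟩` is an `n`-exangle: for every object `Q` the two induced sequences of
abelian groups
`C(Q,X^0) → ⋯ → C(Q,X^{n+1}) → E(Q,X^0)` and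
`C(X^{n+1},Q) → ⋯ → C(X^0,Q) → E(X^{n+1},Q)`
are exact at every term having both an incoming and an outgoing map. -/
def IsExangle (X : NComplex C n) (δ : (E.obj (op (X.obj (n + 1)))).obj (X.obj 0)) : Prop :=
  (∀ Q : C,
      (∀ i : ℕ, i + 1 ≤ n →
        ExactAt (fun u : Q ⟶ X.obj i => u ≫ X.d i)
          (fun u : Q ⟶ X.obj (i + 1) => u ≫ X.d (i + 1))) ∧
      ExactAt (fun u : Q ⟶ X.obj n => u ≫ X.d n)
        (fun u : Q ⟶ X.obj (n + 1) => pullE E u δ)) ∧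
  (∀ Q : C,
      (∀ i : ℕ, i + 1 ≤ n →
        ExactAt (fun u : X.obj (i + 2) ⟶ Q => X.d (i + 1) ≫ u)
          (fun u : X.obj (i + 1) ⟶ Q => X.d i ≫ u)) ∧
      ExactAt (fun u : X.obj 1 ⟶ Q => X.d 0 ≫ u)
        (fun u : X.obj 0 ⟶ Q => pushE E u δ))

end E

end NExangulated
namespace NExangulated

section Functoriality

variable {C : Type u} [Category.{v} C] (E : Cᵒᵖ ⥤ C ⥤ AddCommGrpCat.{w})

theorem pullE_pullE {A B B' B'' : C} (c : B'' ⟶ B') (c' : B' ⟶ B)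
    (x : (E.obj (op B)).obj A) : pullE E c (pullE E c' x) = pullE E (c ≫ c') x := by
  simp only [pullE, op_comp, E.map_comp, NatTrans.comp_app]
  rfl

theorem pullE_id {A B : C} (x : (E.obj (op B)).obj A) : pullE E (𝟙 B) x = x := by
  simp [pullE]

theorem pushE_sub [Preadditive C] {A A' B : C} [(E.obj (op B)).Additive] (a b : A ⟶ A')
    (x : (E.obj (op B)).obj A) : pushE E (a - b) x = pushE E a x - pushE E b x := by
  simp only [pushE, Functor.map_sub]
  rfl

end Functoriality

namespace NComplexHom

variable {C : Type u} [Category.{v} C] [Preadditive C] {n : ℕ} {X Y : NComplex C n}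

def addNullHomotopicAtZero (f : NComplexHom X Y) (v : X.obj 1 ⟶ Y.obj 0) (hn : 0 < n) :
    NComplexHom X Y where
  f
    | 0 => f.f 0 + X.d 0 ≫ v
    | 1 => f.f 1 + v ≫ Y.d 0
    | j + 2 => f.f (j + 2)
  comm
    | 0, _ => by
      simp only [Preadditive.add_comp, Preadditive.comp_add, Category.assoc, f.comm 0 hn.le]
    | 1, hi => by
      simp only [Preadditive.add_comp, Category.assoc, Y.d_comp_d 0 hn, comp_zero, add_zero,
        f.comm 1 hi]
    | j + 2, hi => f.comm (j + 2) hi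

variable (f : NComplexHom X Y) (v : X.obj 1 ⟶ Y.obj 0) (hn : 0 < n)

theorem addNullHomotopicAtZero_f_zero :
    (f.addNullHomotopicAtZero v hn).f 0 = f.f 0 + X.d 0 ≫ v := rfl

theorem addNullHomotopicAtZero_f_top :
    (f.addNullHomotopicAtZero v hn).f (n + 1) = f.f (n + 1) := by
  obtain ⟨m, rfl⟩ := Nat.exists_eq_add_of_lt hn
  rfl

theorem isHomotopy_addNullHomotopicAtZero :
    IsHomotopy f (f.addNullHomotopicAtZero v hn) fun | 0 => v | _ + 1 => 0 := by
  refine ⟨add_sub_cancel_left _ _, fun i _ => ?_, ?_⟩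
  · rcases i with _ | j
    · exact (add_sub_cancel_left _ _).trans (by simp)
    · exact (sub_self _).trans (by simp)
  · obtain ⟨m, rfl⟩ := Nat.exists_eq_add_of_lt hn
    exact (sub_self _).trans (by simp)

theorem homotopic_addNullHomotopicAtZero : Homotopic f (f.addNullHomotopicAtZero v hn) :=
  ⟨_, f.isHomotopy_addNullHomotopicAtZero v hn⟩

end NComplexHom

end NExangulated
namespace NExangulated

variable {C : Type u} [Category.{v} C] [Preadditive C] [HasFiniteBiproducts C] {n : ℕ}

/-- Let `⟨X•,δ⟩` and `⟨Y•,δ⟩` be `n`-exangles with the same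
ends `A`, `C` and the same extension `δ`.  If `f• : X• → Y•` is a morphism of
complexes satisfying `(f^0)_*δ = (f^{n+1})^*δ` and `f^{n+1} = id_C`, then `f•`
is homotopic to a morphism `f'•` with `f'^0 = id_A` and `f'^{n+1} = id_C`. -/
theorem statement_9 (hn : 0 < n) (E : Cᵒᵖ ⥤ C ⥤ AddCommGrpCat.{w})
    [E.Additive] [∀ B : Cᵒᵖ, (E.obj B).Additive]
    (X Y : NComplex C n)
    (h0 : Y.obj 0 = X.obj 0) (htop : Y.obj (n + 1) = X.obj (n + 1))
    (δ : (E.obj (op (X.obj (n + 1)))).obj (X.obj 0))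
    (hXe : IsExangle E X δ)
    (hYe : IsExangle E Y (pullE E (eqToHom htop) (pushE E (eqToHom h0.symm) δ)))
    (f : NComplexHom X Y)
    (hf : pushE E (f.f 0) δ =
      pullE E (f.f (n + 1)) (pullE E (eqToHom htop) (pushE E (eqToHom h0.symm) δ)))
    (hftop : f.f (n + 1) = eqToHom htop.symm) :
    ∃ f' : NComplexHom X Y, Homotopic f f' ∧
      f'.f 0 = eqToHom h0.symm ∧ f'.f (n + 1) = eqToHom htop.symm := by
  have hf0 : pushE E (f.f 0) δ = pushE E (eqToHom h0.symm) δ := by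
    rw [hf, hftop, pullE_pullE, eqToHom_trans, eqToHom_refl, pullE_id]
  have hδ : pushE E (eqToHom h0.symm - f.f 0) δ = 0 := by
    rw [pushE_sub, hf0, sub_self]
  -- exactness of `C(X^1, Y^0) → C(X^0, Y^0) → E(X^{n+1}, Y^0)`
  obtain ⟨v, hv⟩ : ∃ v, X.d 0 ≫ v = eqToHom h0.symm - f.f 0 := ((hXe.2 (Y.obj 0)).2 _).mp hδ
  refine ⟨f.addNullHomotopicAtZero v hn, f.homotopic_addNullHomotopicAtZero v hn, ?_, ?_⟩
  · rw [NComplexHom.addNullHomotopicAtZero_f_zero, hv, add_sub_cancel]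
  · rw [NComplexHom.addNullHomotopicAtZero_f_top, hftop]

end NExangulated
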